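/- arXiv:2008.03489 — 5 statements merged into one kernel-verified Lean document; each statement's English description precedes it below -/
import Mathlib

section
/- Let F and G be clausal ground formulas (without equality) and let N₀ be the root of a leaf-closed two-sided clausal ground tableau for F and G. Then (1) F ⊨ ipol(N₀) ⊨ ¬G, and (2) lit(ipol(N₀)) ⊆ lit(F) ∩ lit(¬G). -/
open Classical

namespace CTIF

/-- First-order terms: variables and applications of function symbols
(a function symbol is a natural number used with an arity). -/
inductive Tm : Type where
  | var : ℕ → Tm
  | app : ℕ → (n : ℕ) → (Fin n → Tm) → Tm

/-- First-order formulas without equality. -/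
inductive Fml : Type where
  | tru : Fml
  | fls : Fml
  | atom : ℕ → (n : ℕ) → (Fin n → Tm) → Fml
  | neg : Fml → Fml
  | conj : Fml → Fml → Fml
  | disj : Fml → Fml → Fml
  | all : ℕ → Fml → Fml
  | exi : ℕ → Fml → Fml

/-- A structure: interpretation of all function and predicate symbols (at every arity). -/
structure Struc (D : Type) : Type where
  fn : ℕ → (n : ℕ) → (Fin n → D) → D
  pr : ℕ → (n : ℕ) → (Fin n → D) → Prop

def Tm.eval {D : Type} (M : Struc D) (a : ℕ → D) : Tm → D
  | .var x => a x
  | .app f n ts => M.fn f n (fun i => (ts i).eval M a)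

def Fml.sat {D : Type} : Fml → Struc D → (ℕ → D) → Prop
  | .tru, _, _ => True
  | .fls, _, _ => False
  | .atom p n ts, M, a => M.pr p n (fun i => (ts i).eval M a)
  | .neg F, M, a => ¬ F.sat M a
  | .conj F G, M, a => F.sat M a ∧ G.sat M a
  | .disj F G, M, a => F.sat M a ∨ G.sat M a
  | .all x F, M, a => ∀ d, F.sat M (Function.update a x d)
  | .exi x F, M, a => ∃ d, F.sat M (Function.update a x d)

/-- Entailment: every model (with any variable assignment) of `F` satisfies `G`. -/
def entails (F G : Fml) : Prop :=
  ∀ (D : Type), Nonempty D → ∀ (M : Struc D) (a : ℕ → D), F.sat M a → G.sat M a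

def Tm.vars : Tm → Set ℕ
  | .var x => {x}
  | .app _ _ ts => ⋃ i, (ts i).vars

/-- Function symbols (with their arity) occurring in a term. -/
def Tm.funs : Tm → Set (ℕ × ℕ)
  | .var _ => ∅
  | .app f n ts => insert (f, n) (⋃ i, (ts i).funs)

def Tm.isGround (t : Tm) : Prop := t.vars = ∅

/-- `t` is a ground term all of whose function symbols come from `S`. -/
def Tm.builtFrom (S : Set (ℕ × ℕ)) : Tm → Prop
  | .var _ => False
  | .app f n ts => (f, n) ∈ S ∧ ∀ i, Tm.builtFrom S (ts i)

/-- `t` occurs (as a subterm) in the given term. -/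
def Tm.occursIn (t : Tm) : Tm → Prop
  | .var x => t = Tm.var x
  | .app f n ts => t = Tm.app f n ts ∨ ∃ i, Tm.occursIn t (ts i)

/-- `s` is a strict subterm of `t`. -/
def Tm.strictSub (s t : Tm) : Prop := s ≠ t ∧ s.occursIn t

def Fml.funs : Fml → Set (ℕ × ℕ)
  | .tru => ∅
  | .fls => ∅
  | .atom _ _ ts => ⋃ i, (ts i).funs
  | .neg F => F.funs
  | .conj F G => F.funs ∪ G.funs
  | .disj F G => F.funs ∪ G.funs
  | .all _ F => F.funs
  | .exi _ F => F.funs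

/-- Predicate symbols with the polarity (`true` = positive) of their occurrences;
the second argument is the polarity of the context. -/
def Fml.preds : Fml → Bool → Set (ℕ × Bool)
  | .tru, _ => ∅
  | .fls, _ => ∅
  | .atom p _ _, pol => {(p, pol)}
  | .neg F, pol => F.preds (!pol)
  | .conj F G, pol => F.preds pol ∪ G.preds pol
  | .disj F G, pol => F.preds pol ∪ G.preds pol
  | .all _ F, pol => F.preds pol
  | .exi _ F, pol => F.preds pol

/-- pred(F): predicates paired with the polarities of their occurrences in `F`. -/
def Fml.pred (F : Fml) : Set (ℕ × Bool) := F.preds true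

/-- Predicate symbols occurring in a formula (disregarding polarity). -/
def Fml.predSyms : Fml → Set ℕ
  | .tru => ∅
  | .fls => ∅
  | .atom p _ _ => {p}
  | .neg F => F.predSyms
  | .conj F G => F.predSyms ∪ G.predSyms
  | .disj F G => F.predSyms ∪ G.predSyms
  | .all _ F => F.predSyms
  | .exi _ F => F.predSyms

def Fml.free : Fml → Set ℕ
  | .tru => ∅
  | .fls => ∅
  | .atom _ _ ts => ⋃ i, (ts i).vars
  | .neg F => F.free
  | .conj F G => F.free ∪ G.free
  | .disj F G => F.free ∪ G.free
  | .all x F => F.free \ {x}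
  | .exi x F => F.free \ {x}

/-- Variables occurring bound (i.e. quantified upon) in a formula. -/
def Fml.bound : Fml → Set ℕ
  | .tru => ∅
  | .fls => ∅
  | .atom _ _ _ => ∅
  | .neg F => F.bound
  | .conj F G => F.bound ∪ G.bound
  | .disj F G => F.bound ∪ G.bound
  | .all x F => insert x F.bound
  | .exi x F => insert x F.bound

def Fml.isQF : Fml → Prop
  | .tru => True
  | .fls => True
  | .atom _ _ _ => True
  | .neg F => F.isQF
  | .conj F G => F.isQF ∧ G.isQF
  | .disj F G => F.isQF ∧ G.isQF
  | .all _ _ => False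
  | .exi _ _ => False

def Fml.isGround (F : Fml) : Prop := F.isQF ∧ F.free = ∅

def Fml.isSentence (F : Fml) : Prop := F.free = ∅

/-- Substitutions: mappings from variables to terms. -/
abbrev Subst := ℕ → Tm

def Subst.dom (σ : Subst) : Set ℕ := {x | σ x ≠ Tm.var x}

def Subst.rng (σ : Subst) : Set Tm := {t | ∃ x ∈ σ.dom, σ x = t}

def Subst.isGround (σ : Subst) : Prop := ∀ x ∈ σ.dom, (σ x).isGround

/-- Injective substitution: distinct domain variables are mapped to distinct terms. -/
def Subst.inj (σ : Subst) : Prop := ∀ x ∈ σ.dom, ∀ y ∈ σ.dom, σ x = σ y → x = y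

def Tm.subst (σ : Subst) : Tm → Tm
  | .var x => σ x
  | .app f n ts => .app f n (fun i => (ts i).subst σ)

/-- Substitution application to formulas (free occurrences of variables are replaced). -/
def Fml.subst (σ : Subst) : Fml → Fml
  | .tru => .tru
  | .fls => .fls
  | .atom p n ts => .atom p n (fun i => (ts i).subst σ)
  | .neg F => .neg (F.subst σ)
  | .conj F G => .conj (F.subst σ) (G.subst σ)
  | .disj F G => .disj (F.subst σ) (G.subst σ)
  | .all x F => .all x (F.subst (Function.update σ x (Tm.var x)))
  | .exi x F => .exi x (F.subst (Function.update σ x (Tm.var x)))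

/-- Inverse application of an injective substitution to a term:
all rng(σ)-maximal occurrences of terms in the range of σ are replaced by
the corresponding domain variable. -/
noncomputable def Tm.inv (σ : Subst) : Tm → Tm
  | .var x =>
      if h : ∃ v ∈ Subst.dom σ, σ v = Tm.var x then Tm.var h.choose else Tm.var x
  | .app f n ts =>
      if h : ∃ v ∈ Subst.dom σ, σ v = Tm.app f n ts then Tm.var h.choose
      else .app f n (fun i => Tm.inv σ (ts i))

/-- Inverse application of an injective substitution to a formula. -/
noncomputable def Fml.inv (σ : Subst) : Fml → Fml
  | .tru => .tru
  | .fls => .fls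
  | .atom p n ts => .atom p n (fun i => Tm.inv σ (ts i))
  | .neg F => .neg (F.inv σ)
  | .conj F G => .conj (F.inv σ) (G.inv σ)
  | .disj F G => .disj (F.inv σ) (G.inv σ)
  | .all x F => .all x (F.inv σ)
  | .exi x F => .exi x (F.inv σ)

/-- `H` is a Craig-Lyndon interpolant of `F` and `G`. -/
def CLInterp (F G H : Fml) : Prop :=
  entails F H ∧ entails H G ∧
  H.pred ⊆ F.pred ∩ G.pred ∧
  H.funs ⊆ F.funs ∩ G.funs ∧
  H.free ⊆ F.free ∩ G.free

/-- `H` is a Craig interpolant of `F` and `G` (no polarity constraint). -/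
def CraigInterp (F G H : Fml) : Prop :=
  entails F H ∧ entails H G ∧
  H.predSyms ⊆ F.predSyms ∩ G.predSyms ∧
  H.funs ⊆ F.funs ∩ G.funs ∧
  H.free ⊆ F.free ∩ G.free

/-- An S-term: a term whose outermost function symbol is in `S`. -/
def isSTerm (S : Set (ℕ × ℕ)) : Tm → Prop
  | .var _ => False
  | .app f n _ => (f, n) ∈ S

def STerms (S : Set (ℕ × ℕ)) : Set Tm := {t | isSTerm S t}

/-- `t` has a `T`-maximal occurrence in the given term: an occurrence that is
not within an occurrence of another member of `T`. -/
def Tm.hasMaxOcc (T : Set Tm) (t : Tm) : Tm → Prop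
  | .var x => Tm.var x ∈ T ∧ t = Tm.var x
  | .app f n ts =>
      (Tm.app f n ts ∈ T ∧ t = Tm.app f n ts) ∨
      (Tm.app f n ts ∉ T ∧ ∃ i, Tm.hasMaxOcc T t (ts i))

/-- `t` has a `T`-maximal occurrence in the formula. -/
def Fml.hasMaxOcc (T : Set Tm) (t : Tm) : Fml → Prop
  | .tru => False
  | .fls => False
  | .atom _ _ ts => ∃ i, Tm.hasMaxOcc T t (ts i)
  | .neg F => F.hasMaxOcc T t
  | .conj F G => F.hasMaxOcc T t ∨ G.hasMaxOcc T t
  | .disj F G => F.hasMaxOcc T t ∨ G.hasMaxOcc T t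
  | .all _ F => F.hasMaxOcc T t
  | .exi _ F => F.hasMaxOcc T t

/-- Universal quantification over a list of variables. -/
def alls (xs : List ℕ) (F : Fml) : Fml := xs.foldr Fml.all F

end CTIF
namespace CTIF

/-- A literal: an atom (pos = true) or a negated atom (pos = false). -/
structure Lit : Type where
  pos : Bool
  p : ℕ
  arity : ℕ
  args : Fin arity → Tm

def Lit.compl (L : Lit) : Lit := { L with pos := !L.pos }

def Lit.toFml (L : Lit) : Fml :=
  if L.pos then .atom L.p L.arity L.args else .neg (.atom L.p L.arity L.args)

def Lit.isGround (L : Lit) : Prop := ∀ i, (L.args i).isGround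

def Lit.funs (L : Lit) : Set (ℕ × ℕ) := ⋃ i, (L.args i).funs

/-- A clause: a disjunction of literals. -/
abbrev Clause := List Lit

/-- A clausal formula: a conjunction of clauses. -/
abbrev CF := List Clause

def Clause.toFml : Clause → Fml
  | [] => .fls
  | [L] => L.toFml
  | L :: C => .disj L.toFml (Clause.toFml C)

def CF.toFml : CF → Fml
  | [] => .tru
  | [C] => C.toFml
  | C :: F => .conj C.toFml (CF.toFml F)

def Lit.subst (σ : Subst) (L : Lit) : Lit := { L with args := fun i => (L.args i).subst σ }

def Clause.subst (σ : Subst) (C : Clause) : Clause := C.map (Lit.subst σ)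

/-- `C` is an instance of `C'`. -/
def isInstanceOf (C C' : Clause) : Prop := ∃ σ : Subst, C = Clause.subst σ C'

/-- `C` is an instance of some clause of the clausal formula `F`. -/
def instOfSome (F : CF) (C : Clause) : Prop := ∃ C' ∈ F, isInstanceOf C C'

def Lit.sat {D : Type} (M : Struc D) (a : ℕ → D) (L : Lit) : Prop := (L.toFml).sat M a

def Clause.sat {D : Type} (M : Struc D) (a : ℕ → D) (C : Clause) : Prop := ∃ L ∈ C, L.sat M a

def CF.sat {D : Type} (M : Struc D) (a : ℕ → D) (F : CF) : Prop := ∀ C ∈ F, Clause.sat M a C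

/-- Unsatisfiability of the universal closure ∀x₁…∀xₙ F of a clausal formula:
in no structure all assignments satisfy `F`. -/
def CF.closureUnsat (F : CF) : Prop :=
  ∀ (D : Type), Nonempty D → ∀ (M : Struc D), ¬ ∀ a : ℕ → D, CF.sat M a F

def CF.funs (F : CF) : Set (ℕ × ℕ) := {fn | ∃ C ∈ F, ∃ L ∈ C, fn ∈ L.funs}

/-- lit(F): the atoms (encoded as literals with `pos` giving the polarity)
occurring in `F` together with the polarity of their occurrence. -/
def Fml.lits : Fml → Bool → Set Lit
  | .tru, _ => ∅
  | .fls, _ => ∅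
  | .atom p n ts, pol => {⟨pol, p, n, ts⟩}
  | .neg F, pol => F.lits (!pol)
  | .conj F G, pol => F.lits pol ∪ G.lits pol
  | .disj F G, pol => F.lits pol ∪ G.lits pol
  | .all _ F, pol => F.lits pol
  | .exi _ F, pol => F.lits pol

def Fml.litset (F : Fml) : Set Lit := F.lits true

end CTIF
namespace CTIF

/-- The non-root part of a two-sided clausal tableau: nodes carry a literal label
and a side label (`true` = side F, `false` = side G). -/
inductive Tab2 : Type where
  | node : Lit → Bool → List Tab2 → Tab2

def Tab2.lit : Tab2 → Lit
  | .node L _ _ => L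

def Tab2.side : Tab2 → Bool
  | .node _ s _ => s

/-- Well-formedness of a subtree of a two-sided clausal tableau for `F` and `G`:
siblings share their side label; if the children have side F (resp. G) then the
disjunction of their literals is an instance of a clause of `F` (resp. `G`). -/
inductive Tab2.isFor (F G : CF) : Tab2 → Prop where
  | mk : ∀ (L : Lit) (s : Bool) (cs : List Tab2) (s' : Bool),
      (∀ t ∈ cs, Tab2.side t = s') →
      (cs ≠ [] → instOfSome (if s' then F else G) (cs.map Tab2.lit)) →
      (∀ t ∈ cs, Tab2.isFor F G t) →
      Tab2.isFor F G (.node L s cs)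

/-- All leaves of the subtree are closing: each leaf has an ancestor labeled with
the complementary literal. `anc` is the list of the ancestors' literals. -/
inductive Tab2.leafClosed : List Lit → Tab2 → Prop where
  | leaf : ∀ (anc : List Lit) (L : Lit) (s : Bool),
      L.compl ∈ anc → Tab2.leafClosed anc (.node L s [])
  | inner : ∀ (anc : List Lit) (L : Lit) (s : Bool) (cs : List Tab2),
      cs ≠ [] → (∀ t ∈ cs, Tab2.leafClosed (L :: anc) t) →
      Tab2.leafClosed anc (.node L s cs)

/-- All literal labels in the subtree are ground. -/
inductive Tab2.ground : Tab2 → Prop where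
  | mk : ∀ (L : Lit) (s : Bool) (cs : List Tab2),
      L.isGround → (∀ t ∈ cs, Tab2.ground t) → Tab2.ground (.node L s cs)

def bigDisj : List Fml → Fml
  | [] => .fls
  | [H] => H
  | H :: Hs => .disj H (bigDisj Hs)

def bigConj : List Fml → Fml
  | [] => .tru
  | [H] => H
  | H :: Hs => .conj H (bigConj Hs)

/-- The function ipol, presented as a relation because a closing leaf may have several
possible targets (ancestors with complementary literal).  `anc` lists the (literal,
side) pairs of the ancestors.  `Ipol anc t H` holds iff `H` is a possible value of
ipol at the node `t`. -/
inductive Ipol : List (Lit × Bool) → Tab2 → Fml → Prop where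
  | leafFF : ∀ (anc : List (Lit × Bool)) (L : Lit),
      (L.compl, true) ∈ anc → Ipol anc (.node L true []) .fls
  | leafFG : ∀ (anc : List (Lit × Bool)) (L : Lit),
      (L.compl, false) ∈ anc → Ipol anc (.node L true []) L.toFml
  | leafGF : ∀ (anc : List (Lit × Bool)) (L : Lit),
      (L.compl, true) ∈ anc → Ipol anc (.node L false []) L.compl.toFml
  | leafGG : ∀ (anc : List (Lit × Bool)) (L : Lit),
      (L.compl, false) ∈ anc → Ipol anc (.node L false []) .tru
  | innerF : ∀ (anc : List (Lit × Bool)) (L : Lit) (s : Bool) (cs : List Tab2) (Hs : List Fml),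
      cs ≠ [] → (∀ t ∈ cs, Tab2.side t = true) →
      ∀ (hlen : cs.length = Hs.length),
      (∀ i : Fin cs.length, Ipol ((L, s) :: anc) (cs.get i) (Hs.get (Fin.cast hlen i))) →
      Ipol anc (.node L s cs) (bigDisj Hs)
  | innerG : ∀ (anc : List (Lit × Bool)) (L : Lit) (s : Bool) (cs : List Tab2) (Hs : List Fml),
      cs ≠ [] → (∀ t ∈ cs, Tab2.side t = false) →
      ∀ (hlen : cs.length = Hs.length),
      (∀ i : Fin cs.length, Ipol ((L, s) :: anc) (cs.get i) (Hs.get (Fin.cast hlen i))) →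
      Ipol anc (.node L s cs) (bigConj Hs)

/-- The value of ipol at the (unlabeled) root, whose children are `cs`. -/
inductive IpolRoot : List Tab2 → Fml → Prop where
  | rootF : ∀ (cs : List Tab2) (Hs : List Fml),
      cs ≠ [] → (∀ t ∈ cs, Tab2.side t = true) →
      ∀ (hlen : cs.length = Hs.length),
      (∀ i : Fin cs.length, Ipol [] (cs.get i) (Hs.get (Fin.cast hlen i))) →
      IpolRoot cs (bigDisj Hs)
  | rootG : ∀ (cs : List Tab2) (Hs : List Fml),
      cs ≠ [] → (∀ t ∈ cs, Tab2.side t = false) →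
      ∀ (hlen : cs.length = Hs.length),
      (∀ i : Fin cs.length, Ipol [] (cs.get i) (Hs.get (Fin.cast hlen i))) →
      IpolRoot cs (bigConj Hs)

/-- A two-sided clausal tableau, given by the children of the (unlabeled) root. -/
structure Tableau2 : Type where
  children : List Tab2

def Tableau2.isFor (F G : CF) (T : Tableau2) : Prop :=
  (∃ s' : Bool, (∀ t ∈ T.children, Tab2.side t = s') ∧
    (T.children ≠ [] → instOfSome (if s' then F else G) (T.children.map Tab2.lit))) ∧
  ∀ t ∈ T.children, Tab2.isFor F G t

def Tableau2.leafClosed (T : Tableau2) : Prop :=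
  T.children ≠ [] ∧ ∀ t ∈ T.children, Tab2.leafClosed [] t

def Tableau2.ground (T : Tableau2) : Prop :=
  ∀ t ∈ T.children, Tab2.ground t

end CTIF
/-!
By induction over the tableau, `ipol(N)` satisfies the invariant `IsBranchInterpolant`:
`F` together with the `F`-literals of the branch through `N` entails `ipol(N)`, and `G`
together with the `G`-literals of that branch entails `¬ipol(N)`. At a leaf this holds because
of the complementary pair closing it; at an inner node the children's literals form a clause of
`F` (matching the disjunction) or of `G` (matching the conjunction), which is where groundness is
needed: an instance of a ground clause is that clause. At the root the branch is empty. Likewise,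
every literal of `ipol(N)` labels an `F`-node of the branch and its complement a `G`-node, so it
occurs in `F` and, with its polarity, in `¬G`.
-/

namespace List

theorem forall₂_of_forall_get {α β : Type*} {R : α → β → Prop} {l₁ : List α} {l₂ : List β}
    (hlen : l₁.length = l₂.length) (h : ∀ i, R (l₁.get i) (l₂.get (Fin.cast hlen i))) :
    Forall₂ R l₁ l₂ :=
  forall₂_of_length_eq_of_get hlen fun i h₁ _ => h ⟨i, h₁⟩

theorem Forall₂.exists_mem_right {α β : Type*} {R : α → β → Prop} {l₁ : List α}
    {l₂ : List β} (h : Forall₂ R l₁ l₂) {x : α} (hx : x ∈ l₁) : ∃ y ∈ l₂, R x y := by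
  induction h with
  | nil => simp at hx
  | cons hxy _ ih =>
    rcases mem_cons.mp hx with rfl | hx
    · exact ⟨_, mem_cons_self, hxy⟩
    · obtain ⟨y, hy, hxy⟩ := ih hx
      exact ⟨y, mem_cons_of_mem _ hy, hxy⟩

theorem Forall₂.exists_mem_left {α β : Type*} {R : α → β → Prop} {l₁ : List α}
    {l₂ : List β} (h : Forall₂ R l₁ l₂) {y : β} (hy : y ∈ l₂) : ∃ x ∈ l₁, R x y :=
  h.flip.exists_mem_right hy

end List

namespace CTIF

open List

theorem Tm.subst_eq_self_of_isGround (σ : Subst) : ∀ {t : Tm}, t.isGround → t.subst σ = t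
  | .var x, h => by simp [Tm.isGround, Tm.vars] at h
  | .app f n ts, h => by
    simp only [Tm.isGround, Tm.vars, Set.iUnion_eq_empty] at h
    simp only [Tm.subst]
    congr 1
    funext i
    exact Tm.subst_eq_self_of_isGround σ (h i)

theorem Lit.subst_eq_self_of_isGround (σ : Subst) {L : Lit} (h : L.isGround) :
    L.subst σ = L := by
  cases L
  simp only [Lit.subst, Lit.mk.injEq, heq_eq_eq, true_and]
  funext i
  exact Tm.subst_eq_self_of_isGround σ (h i)

theorem mem_of_instOfSome {F : CF} {C : Clause} (hF : ∀ C ∈ F, ∀ L ∈ C, L.isGround)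
    (h : instOfSome F C) : C ∈ F := by
  obtain ⟨C', hC', σ, rfl⟩ := h
  rwa [Clause.subst, map_congr_left fun L hL => Lit.subst_eq_self_of_isGround σ (hF C' hC' L hL),
    map_id']

@[simp]
theorem Lit.compl_compl (L : Lit) : L.compl.compl = L := by
  cases L
  simp [Lit.compl]

theorem Lit.sat_compl {D : Type} (M : Struc D) (a : ℕ → D) (L : Lit) :
    L.compl.sat M a ↔ ¬ L.sat M a := by
  rcases L with ⟨_ | _, p, n, args⟩ <;> simp [Lit.sat, Lit.compl, Lit.toFml, Fml.sat]

@[simp]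
theorem Lit.lits_toFml_true (L : Lit) : L.toFml.lits true = {L} := by
  rcases L with ⟨_ | _, p, n, args⟩ <;> simp [Lit.toFml, Fml.lits]

@[simp]
theorem Lit.lits_toFml_false (L : Lit) : L.toFml.lits false = {L.compl} := by
  rcases L with ⟨_ | _, p, n, args⟩ <;> simp [Lit.toFml, Fml.lits, Lit.compl]

section BigConnectives

variable {D : Type} (M : Struc D) (a : ℕ → D)

@[simp]
theorem sat_bigDisj : ∀ {Hs : List Fml}, (bigDisj Hs).sat M a ↔ ∃ H ∈ Hs, H.sat M a
  | [] => by simp [bigDisj, Fml.sat]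
  | [_] => by simp [bigDisj]
  | H :: H' :: Hs => by simp [bigDisj, Fml.sat, sat_bigDisj (Hs := H' :: Hs)]

@[simp]
theorem sat_bigConj : ∀ {Hs : List Fml}, (bigConj Hs).sat M a ↔ ∀ H ∈ Hs, H.sat M a
  | [] => by simp [bigConj, Fml.sat]
  | [_] => by simp [bigConj]
  | H :: H' :: Hs => by simp [bigConj, Fml.sat, sat_bigConj (Hs := H' :: Hs)]

@[simp]
theorem lits_bigDisj (pol : Bool) : ∀ {Hs : List Fml}, (bigDisj Hs).lits pol = ⋃ H ∈ Hs, H.lits pol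
  | [] => by simp [bigDisj, Fml.lits]
  | [_] => by simp [bigDisj]
  | H :: H' :: Hs => by simp [bigDisj, Fml.lits, lits_bigDisj pol (Hs := H' :: Hs)]

@[simp]
theorem lits_bigConj (pol : Bool) : ∀ {Hs : List Fml}, (bigConj Hs).lits pol = ⋃ H ∈ Hs, H.lits pol
  | [] => by simp [bigConj, Fml.lits]
  | [_] => by simp [bigConj]
  | H :: H' :: Hs => by simp [bigConj, Fml.lits, lits_bigConj pol (Hs := H' :: Hs)]

end BigConnectives

theorem Clause.toFml_eq_bigDisj : ∀ C : Clause, C.toFml = bigDisj (C.map Lit.toFml)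
  | [] => rfl
  | [_] => rfl
  | _ :: L' :: C => congrArg _ (Clause.toFml_eq_bigDisj (L' :: C))

theorem CF.toFml_eq_bigConj : ∀ F : CF, F.toFml = bigConj (F.map Clause.toFml)
  | [] => rfl
  | [_] => rfl
  | _ :: C' :: F => congrArg _ (CF.toFml_eq_bigConj (C' :: F))

theorem CF.sat_toFml {D : Type} (M : Struc D) (a : ℕ → D) (F : CF) :
    F.toFml.sat M a ↔ F.sat M a := by
  simp [CF.toFml_eq_bigConj, Clause.toFml_eq_bigDisj, CF.sat, Clause.sat, Lit.sat]

theorem CF.mem_litset_toFml {F : CF} {L : Lit} (h : L ∈ F.flatten) : L ∈ F.toFml.litset := by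
  obtain ⟨C, hC, hL⟩ := mem_flatten.mp h
  rw [Fml.litset, CF.toFml_eq_bigConj, lits_bigConj]
  refine Set.mem_iUnion₂_of_mem (mem_map_of_mem hC) ?_
  rw [Clause.toFml_eq_bigDisj, lits_bigDisj]
  exact Set.mem_iUnion₂_of_mem (mem_map_of_mem hL) (by simp)

theorem CF.compl_mem_litset_neg_toFml {G : CF} {L : Lit} (h : L ∈ G.flatten) :
    L.compl ∈ (Fml.neg G.toFml).litset := by
  obtain ⟨C, hC, hL⟩ := mem_flatten.mp h
  rw [Fml.litset, Fml.lits, Bool.not_true, CF.toFml_eq_bigConj, lits_bigConj]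
  refine Set.mem_iUnion₂_of_mem (mem_map_of_mem hC) ?_
  rw [Clause.toFml_eq_bigDisj, lits_bigDisj]
  exact Set.mem_iUnion₂_of_mem (mem_map_of_mem hL) (by simp)

theorem map_lit_mem_of_side_eq {F G : CF} (hFg : ∀ C ∈ F, ∀ L ∈ C, L.isGround)
    (hGg : ∀ C ∈ G, ∀ L ∈ C, L.isGround) {cs : List Tab2} {s b : Bool}
    (hs : ∀ t ∈ cs, t.side = s)
    (hinst : cs ≠ [] → instOfSome (if s then F else G) (cs.map Tab2.lit))
    (hne : cs ≠ []) (hb : ∀ t ∈ cs, t.side = b) : cs.map Tab2.lit ∈ (if b then F else G) := by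
  obtain ⟨t, ht⟩ := exists_mem_of_ne_nil cs hne
  obtain rfl : s = b := (hs t ht).symm.trans (hb t ht)
  cases s
  · exact mem_of_instOfSome hGg (hinst hne)
  · exact mem_of_instOfSome hFg (hinst hne)

def SatOnSide {D : Type} (M : Struc D) (a : ℕ → D) (s : Bool) (path : List (Lit × Bool)) : Prop :=
  ∀ p ∈ path, p.2 = s → p.1.sat M a

def IsBranchInterpolant (F G : CF) (path : List (Lit × Bool)) (H : Fml) : Prop :=
  ∀ (D : Type) (M : Struc D) (a : ℕ → D),
    (F.sat M a → SatOnSide M a true path → H.sat M a) ∧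
    (G.sat M a → SatOnSide M a false path → ¬ H.sat M a)

def LitsFromSides (F G : CF) (path : List (Lit × Bool)) : Prop :=
  ∀ p ∈ path, p.1 ∈ (if p.2 then F else G).flatten

section Interpolation

variable {F G : CF}

theorem satOnSide_cons {D : Type} {M : Struc D} {a : ℕ → D} {s b : Bool} {L : Lit}
    {path : List (Lit × Bool)} :
    SatOnSide M a s ((L, b) :: path) ↔ (b = s → L.sat M a) ∧ SatOnSide M a s path := by
  simp [SatOnSide]

theorem SatOnSide.false_of_compl_mem {D : Type} {M : Struc D} {a : ℕ → D} {s : Bool} {L : Lit}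
    {path : List (Lit × Bool)} (h : SatOnSide M a s path) (hL : (L, s) ∈ path)
    (hLc : (L.compl, s) ∈ path) : False :=
  (L.sat_compl M a).mp (h _ hLc rfl) (h _ hL rfl)

theorem IsBranchInterpolant.bigDisj {path : List (Lit × Bool)} {cs : List Tab2} {Hs : List Fml}
    (hC : cs.map Tab2.lit ∈ F) (hsides : ∀ t ∈ cs, t.side = true)
    (h : Forall₂ (fun t H => IsBranchInterpolant F G ((t.lit, t.side) :: path) H) cs Hs) :
    IsBranchInterpolant F G path (bigDisj Hs) := by
  intro D M a
  constructor
  · intro hF hpath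
    obtain ⟨_, hmem, hsat⟩ := hF _ hC
    obtain ⟨t, ht, rfl⟩ := mem_map.mp hmem
    obtain ⟨H, hH, hint⟩ := h.exists_mem_right ht
    exact (sat_bigDisj M a).mpr
      ⟨H, hH, (hint D M a).1 hF (satOnSide_cons.mpr ⟨fun _ => hsat, hpath⟩)⟩
  · intro hG hpath hsat
    obtain ⟨H, hH, hHsat⟩ := (sat_bigDisj M a).mp hsat
    obtain ⟨t, ht, hint⟩ := h.exists_mem_left hH
    refine (hint D M a).2 hG (satOnSide_cons.mpr ⟨fun hs => ?_, hpath⟩) hHsat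
    simp [hsides t ht] at hs

theorem IsBranchInterpolant.bigConj {path : List (Lit × Bool)} {cs : List Tab2} {Hs : List Fml}
    (hC : cs.map Tab2.lit ∈ G) (hsides : ∀ t ∈ cs, t.side = false)
    (h : Forall₂ (fun t H => IsBranchInterpolant F G ((t.lit, t.side) :: path) H) cs Hs) :
    IsBranchInterpolant F G path (bigConj Hs) := by
  intro D M a
  constructor
  · intro hF hpath
    refine (sat_bigConj M a).mpr fun H hH => ?_
    obtain ⟨t, ht, hint⟩ := h.exists_mem_left hH
    refine (hint D M a).1 hF (satOnSide_cons.mpr ⟨fun hs => ?_, hpath⟩)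
    simp [hsides t ht] at hs
  · intro hG hpath hsat
    obtain ⟨_, hmem, hLsat⟩ := hG _ hC
    obtain ⟨t, ht, rfl⟩ := mem_map.mp hmem
    obtain ⟨H, hH, hint⟩ := h.exists_mem_right ht
    exact (hint D M a).2 hG (satOnSide_cons.mpr ⟨fun _ => hLsat, hpath⟩)
      ((sat_bigConj M a).mp hsat H hH)

theorem IsBranchInterpolant.entails {H : Fml} (h : IsBranchInterpolant F G [] H) :
    entails F.toFml H ∧ entails H (.neg G.toFml) := by
  have hnil {D : Type} (M : Struc D) (a : ℕ → D) (s : Bool) : SatOnSide M a s [] := by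
    simp [SatOnSide]
  refine ⟨fun D _ M a hF => ?_, fun D _ M a hH hG => ?_⟩
  · exact (h D M a).1 ((CF.sat_toFml M a F).mp hF) (hnil M a true)
  · exact (h D M a).2 ((CF.sat_toFml M a G).mp hG) (hnil M a false) hH

theorem Ipol.isBranchInterpolant (hFg : ∀ C ∈ F, ∀ L ∈ C, L.isGround)
    (hGg : ∀ C ∈ G, ∀ L ∈ C, L.isGround) {anc : List (Lit × Bool)} {t : Tab2} {H : Fml}
    (hip : Ipol anc t H) (hfor : t.isFor F G) :
    IsBranchInterpolant F G ((t.lit, t.side) :: anc) H := by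
  induction hip with
  | leafFF _ L hmem =>
    exact fun D M a => ⟨fun _ hpath => (hpath.false_of_compl_mem mem_cons_self
      (mem_cons_of_mem _ hmem)).elim, fun _ _ h => h⟩
  | leafFG _ L hmem =>
    exact fun D M a => ⟨fun _ hpath => hpath _ mem_cons_self rfl,
      fun _ hpath => (L.sat_compl M a).mp (hpath _ (mem_cons_of_mem _ hmem) rfl)⟩
  | leafGF _ L hmem =>
    exact fun D M a => ⟨fun _ hpath => hpath _ (mem_cons_of_mem _ hmem) rfl,
      fun _ hpath => not_not_intro (hpath _ mem_cons_self rfl) ∘ (L.sat_compl M a).mp⟩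
  | leafGG _ L hmem =>
    exact fun D M a => ⟨fun _ _ => trivial, fun _ hpath _ => hpath.false_of_compl_mem
      mem_cons_self (mem_cons_of_mem _ hmem)⟩
  | innerF _ _ _ cs Hs hne hsides hlen _ ih =>
    obtain ⟨_, _, _, s', hs', hinst, hchild⟩ := hfor
    exact IsBranchInterpolant.bigDisj (map_lit_mem_of_side_eq hFg hGg hs' hinst hne hsides) hsides
      (forall₂_of_forall_get hlen fun i => ih i (hchild _ (get_mem _ _)))
  | innerG _ _ _ cs Hs hne hsides hlen _ ih =>
    obtain ⟨_, _, _, s', hs', hinst, hchild⟩ := hfor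
    exact IsBranchInterpolant.bigConj (map_lit_mem_of_side_eq hFg hGg hs' hinst hne hsides) hsides
      (forall₂_of_forall_get hlen fun i => ih i (hchild _ (get_mem _ _)))

theorem IpolRoot.isBranchInterpolant (hFg : ∀ C ∈ F, ∀ L ∈ C, L.isGround)
    (hGg : ∀ C ∈ G, ∀ L ∈ C, L.isGround) {T : Tableau2} {H : Fml} (hip : IpolRoot T.children H)
    (hfor : T.isFor F G) : IsBranchInterpolant F G [] H := by
  obtain ⟨⟨s', hs', hinst⟩, hchild⟩ := hfor
  cases hip with
  | rootF Hs hne hsides hlen hrec =>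
    exact IsBranchInterpolant.bigDisj (map_lit_mem_of_side_eq hFg hGg hs' hinst hne hsides) hsides
      (forall₂_of_forall_get hlen fun i =>
        (hrec i).isBranchInterpolant hFg hGg (hchild _ (get_mem _ _)))
  | rootG Hs hne hsides hlen hrec =>
    exact IsBranchInterpolant.bigConj (map_lit_mem_of_side_eq hFg hGg hs' hinst hne hsides) hsides
      (forall₂_of_forall_get hlen fun i =>
        (hrec i).isBranchInterpolant hFg hGg (hchild _ (get_mem _ _)))

theorem biUnion_litset_subset {path : List (Lit × Bool)} {cs : List Tab2} {Hs : List Fml} {b : Bool}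
    (hC : cs.map Tab2.lit ∈ (if b then F else G)) (hsides : ∀ t ∈ cs, t.side = b)
    (hpath : LitsFromSides F G path)
    (h : Forall₂ (fun t H => LitsFromSides F G ((t.lit, t.side) :: path) →
      H.litset ⊆ F.toFml.litset ∩ (Fml.neg G.toFml).litset) cs Hs) :
    ⋃ H ∈ Hs, H.litset ⊆ F.toFml.litset ∩ (Fml.neg G.toFml).litset := by
  refine Set.iUnion₂_subset fun H hH => ?_
  obtain ⟨t, ht, hint⟩ := h.exists_mem_left hH
  refine hint (forall_mem_cons.mpr ⟨?_, hpath⟩)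
  rw [hsides t ht]
  exact mem_flatten.mpr ⟨_, hC, mem_map_of_mem ht⟩

theorem Ipol.litset_subset (hFg : ∀ C ∈ F, ∀ L ∈ C, L.isGround)
    (hGg : ∀ C ∈ G, ∀ L ∈ C, L.isGround) {anc : List (Lit × Bool)} {t : Tab2} {H : Fml}
    (hip : Ipol anc t H) (hfor : t.isFor F G) (hpath : LitsFromSides F G ((t.lit, t.side) :: anc)) :
    H.litset ⊆ F.toFml.litset ∩ (Fml.neg G.toFml).litset := by
  induction hip with
  | leafFF => simp [Fml.litset, Fml.lits]
  | leafFG _ L hmem =>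
    rw [Fml.litset, Lit.lits_toFml_true, Set.singleton_subset_iff]
    refine ⟨CF.mem_litset_toFml (hpath _ mem_cons_self), ?_⟩
    simpa using CF.compl_mem_litset_neg_toFml (hpath _ (mem_cons_of_mem _ hmem))
  | leafGF _ L hmem =>
    rw [Fml.litset, Lit.lits_toFml_true, Set.singleton_subset_iff]
    exact ⟨CF.mem_litset_toFml (hpath _ (mem_cons_of_mem _ hmem)),
      CF.compl_mem_litset_neg_toFml (hpath _ mem_cons_self)⟩
  | leafGG => simp [Fml.litset, Fml.lits]
  | innerF _ _ _ cs Hs hne hsides hlen _ ih =>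
    obtain ⟨_, _, _, s', hs', hinst, hchild⟩ := hfor
    rw [Fml.litset, lits_bigDisj]
    exact biUnion_litset_subset (map_lit_mem_of_side_eq hFg hGg hs' hinst hne hsides) hsides hpath
      (forall₂_of_forall_get hlen fun i => ih i (hchild _ (get_mem _ _)))
  | innerG _ _ _ cs Hs hne hsides hlen _ ih =>
    obtain ⟨_, _, _, s', hs', hinst, hchild⟩ := hfor
    rw [Fml.litset, lits_bigConj]
    exact biUnion_litset_subset (map_lit_mem_of_side_eq hFg hGg hs' hinst hne hsides) hsides hpath
      (forall₂_of_forall_get hlen fun i => ih i (hchild _ (get_mem _ _)))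

theorem IpolRoot.litset_subset (hFg : ∀ C ∈ F, ∀ L ∈ C, L.isGround)
    (hGg : ∀ C ∈ G, ∀ L ∈ C, L.isGround) {T : Tableau2} {H : Fml} (hip : IpolRoot T.children H)
    (hfor : T.isFor F G) : H.litset ⊆ F.toFml.litset ∩ (Fml.neg G.toFml).litset := by
  obtain ⟨⟨s', hs', hinst⟩, hchild⟩ := hfor
  have hnil : LitsFromSides F G [] := by simp [LitsFromSides]
  cases hip with
  | rootF Hs hne hsides hlen hrec =>
    rw [Fml.litset, lits_bigDisj]
    exact biUnion_litset_subset (map_lit_mem_of_side_eq hFg hGg hs' hinst hne hsides) hsides hnil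
      (forall₂_of_forall_get hlen fun i =>
        (hrec i).litset_subset hFg hGg (hchild _ (get_mem _ _)))
  | rootG Hs hne hsides hlen hrec =>
    rw [Fml.litset, lits_bigConj]
    exact biUnion_litset_subset (map_lit_mem_of_side_eq hFg hGg hs' hinst hne hsides) hsides hnil
      (forall₂_of_forall_get hlen fun i =>
        (hrec i).litset_subset hFg hGg (hchild _ (get_mem _ _)))

end Interpolation

theorem statement1_general (F G : CF)
    (hFg : ∀ C ∈ F, ∀ L ∈ C, Lit.isGround L)
    (hGg : ∀ C ∈ G, ∀ L ∈ C, Lit.isGround L)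
    (T : Tableau2) (hfor : T.isFor F G)
    (H : Fml) (hipol : IpolRoot T.children H) :
    (entails (CF.toFml F) H ∧ entails H (.neg (CF.toFml G))) ∧
    H.litset ⊆ (CF.toFml F).litset ∩ (Fml.neg (CF.toFml G)).litset :=
  ⟨(hipol.isBranchInterpolant hFg hGg hfor).entails, hipol.litset_subset hFg hGg hfor⟩

/-- Correctness of interpolant extraction from clausal ground tableaux.
If `F` and `G` are clausal ground formulas and `N₀` is the root of a leaf-closed
two-sided clausal ground tableau for `F` and `G`, then for (any possible value of)
`H = ipol(N₀)`: (1) F ⊨ H ⊨ ¬G, and (2) lit(H) ⊆ lit(F) ∩ lit(¬G). -/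
theorem statement1 (F G : CF)
    (hFg : ∀ C ∈ F, ∀ L ∈ C, Lit.isGround L)
    (hGg : ∀ C ∈ G, ∀ L ∈ C, Lit.isGround L)
    (T : Tableau2) (hfor : T.isFor F G) (hlc : T.leafClosed) (hg : T.ground)
    (H : Fml) (hipol : IpolRoot T.children H) :
    (entails (CF.toFml F) H ∧ entails H (.neg (CF.toFml G))) ∧
    H.litset ⊆ (CF.toFml F).litset ∩ (Fml.neg (CF.toFml G)).litset :=
  statement1_general F G hFg hGg T hfor H hipol

end CTIF
end

section
/- For all ground first-order formulas F and G without equality such that F ⊨ G, there exists a ground formula H that is a Craig-Lyndon interpolant of F and G, i.e., F ⊨ H ⊨ G, pred(H) ⊆ pred(F) ∩ pred(G), and fun(H) ⊆ fun(F) ∩ fun(G). -/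
/-!
A ground formula is a propositional formula whose variables are ground atoms, and since a
truth assignment to the atoms is realised by a Herbrand structure on terms, entailment between
ground formulas is propositional entailment. Propositional Lyndon interpolation then applies:
eliminating the atoms `α` of `F` one by one, replacing `F` by
`(F[α := ⊤] ∧ α) ∨ (F[α := ⊥] ∧ ¬α)` where each literal is kept only if it occurs with that
polarity in both `F` and `G` (and is replaced by `⊤` otherwise), yields a formula between `F`
and `G` all of whose signed atoms occur in both. Its predicates, with their polarities, and its
function symbols are therefore shared by `F` and `G`.
-/

open Classical

namespace CTIF

structure Atom where
  pred : ℕ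
  arity : ℕ
  args : Fin arity → Tm

namespace Atom

def toFml (α : Atom) : Fml := .atom α.pred α.arity α.args

def funs (α : Atom) : Set (ℕ × ℕ) := ⋃ i, (α.args i).funs

def vars (α : Atom) : Set ℕ := ⋃ i, (α.args i).vars

def lit (α : Atom) (b : Bool) : Fml := if b then α.toFml else .neg α.toFml

end Atom

namespace Fml

/-- Quantifiers are ignored: this is only meaningful for quantifier-free formulas. -/
def eval : Fml → (Atom → Bool) → Bool
  | .tru, _ => true
  | .fls, _ => false
  | .atom p n ts, v => v ⟨p, n, ts⟩
  | .neg F, v => !F.eval v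
  | .conj F G, v => F.eval v && G.eval v
  | .disj F G, v => F.eval v || G.eval v
  | .all _ F, v => F.eval v
  | .exi _ F, v => F.eval v

/-- Signed atoms: `(α, true)` for a positive and `(α, false)` for a negative occurrence of `α`;
the second argument is the polarity of the context. -/
def lits_s2 : Fml → Bool → Set (Atom × Bool)
  | .tru, _ => ∅
  | .fls, _ => ∅
  | .atom p n ts, pol => {(⟨p, n, ts⟩, pol)}
  | .neg F, pol => F.lits_s2 (!pol)
  | .conj F G, pol => F.lits_s2 pol ∪ G.lits_s2 pol
  | .disj F G, pol => F.lits_s2 pol ∪ G.lits_s2 pol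
  | .all _ F, pol => F.lits_s2 pol
  | .exi _ F, pol => F.lits_s2 pol

def atoms : Fml → List Atom
  | .tru => []
  | .fls => []
  | .atom p n ts => [⟨p, n, ts⟩]
  | .neg F => F.atoms
  | .conj F G => F.atoms ++ G.atoms
  | .disj F G => F.atoms ++ G.atoms
  | .all _ F => F.atoms
  | .exi _ F => F.atoms

noncomputable def assign (α : Atom) (b : Bool) : Fml → Fml
  | .tru => .tru
  | .fls => .fls
  | .atom p n ts => if (⟨p, n, ts⟩ : Atom) = α then (if b then .tru else .fls) else .atom p n ts
  | .neg F => .neg (F.assign α b)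
  | .conj F G => .conj (F.assign α b) (G.assign α b)
  | .disj F G => .disj (F.assign α b) (G.assign α b)
  | .all x F => .all x (F.assign α b)
  | .exi x F => .exi x (F.assign α b)

theorem preds_eq_image_lits (F : Fml) (pol : Bool) :
    F.preds pol = (fun x => (x.1.pred, x.2)) '' F.lits_s2 pol := by
  induction F generalizing pol with
  | tru | fls => simp [preds, lits_s2]
  | atom p n ts => simp [preds, lits_s2]
  | neg F ih => exact ih (!pol)
  | conj F G ihF ihG | disj F G ihF ihG => simp only [preds, lits_s2, ihF, ihG, Set.image_union]
  | all _ F ih | exi _ F ih => exact ih pol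

theorem funs_eq_biUnion_lits (F : Fml) (pol : Bool) :
    F.funs = ⋃ x ∈ F.lits_s2 pol, x.1.funs := by
  induction F generalizing pol with
  | tru | fls => simp [Fml.funs, lits_s2]
  | atom p n ts => simp [Fml.funs, lits_s2, Atom.funs]
  | neg F ih => exact ih (!pol)
  | conj F G ihF ihG | disj F G ihF ihG =>
    simp only [Fml.funs, lits_s2, ← ihF, ← ihG, Set.biUnion_union]
  | all _ F ih | exi _ F ih => exact ih pol

theorem free_eq_biUnion_lits {F : Fml} (hF : F.isQF) (pol : Bool) :
    F.free = ⋃ x ∈ F.lits_s2 pol, x.1.vars := by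
  induction F generalizing pol with
  | tru | fls => simp [free, lits_s2]
  | atom p n ts => simp [free, lits_s2, Atom.vars]
  | neg F ih => exact ih hF (!pol)
  | conj F G ihF ihG | disj F G ihF ihG =>
    simp only [free, lits_s2, ← ihF hF.1, ← ihG hF.2, Set.biUnion_union]
  | all | exi => exact hF.elim

theorem mem_atoms_of_mem_lits {F : Fml} {pol : Bool} {x : Atom × Bool} (hx : x ∈ F.lits_s2 pol) :
    x.1 ∈ F.atoms := by
  induction F generalizing pol with
  | atom p n ts => obtain rfl := hx; exact List.mem_singleton_self _
  | neg F ih => exact ih hx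
  | conj F G ihF ihG | disj F G ihF ihG =>
    exact List.mem_append.2 (hx.imp ihF ihG)
  | all _ F ih | exi _ F ih => exact ih hx
  | tru | fls => exact absurd hx (Set.notMem_empty x)

theorem eval_mono (F : Fml) (pol : Bool) {v w : Atom → Bool}
    (h : ∀ x ∈ F.lits_s2 pol, v x.1 = x.2 → w x.1 = x.2) : F.eval v = pol → F.eval w = pol := by
  induction F generalizing pol with
  | tru | fls => exact id
  | atom p n ts => exact h _ rfl
  | neg F ih =>
    simpa only [eval, Bool.not_eq_eq_eq_not] using ih (!pol) h
  | conj F G ihF ihG =>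
    have hF := ihF pol fun x hx => h x (Or.inl hx)
    have hG := ihG pol fun x hx => h x (Or.inr hx)
    cases pol
    · simp only [eval, Bool.and_eq_false_iff]; exact Or.imp hF hG
    · simp only [eval, Bool.and_eq_true]; exact And.imp hF hG
  | disj F G ihF ihG =>
    have hF := ihF pol fun x hx => h x (Or.inl hx)
    have hG := ihG pol fun x hx => h x (Or.inr hx)
    cases pol
    · simp only [eval, Bool.or_eq_false_iff]; exact And.imp hF hG
    · simp only [eval, Bool.or_eq_true]; exact Or.imp hF hG
  | all _ F ih | exi _ F ih => exact ih pol h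

theorem eval_of_eval_update {F : Fml} {α : Atom} {b : Bool} (hα : (α, b) ∉ F.lits_s2 true)
    {v : Atom → Bool} (hF : F.eval (Function.update v α b) = true) : F.eval v = true := by
  refine F.eval_mono true (fun x hx hvx => ?_) hF
  by_cases hx1 : x.1 = α
  · obtain ⟨β, c⟩ := x
    obtain rfl : β = α := hx1
    obtain rfl : b = c := by simpa using hvx
    exact absurd hx hα
  · rwa [Function.update_of_ne hx1] at hvx

theorem eval_assign (F : Fml) (α : Atom) (b : Bool) (v : Atom → Bool) :
    (F.assign α b).eval v = F.eval (Function.update v α b) := by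
  induction F with
  | atom p n ts =>
    by_cases h : (⟨p, n, ts⟩ : Atom) = α
    · subst h; cases b <;> simp [assign, eval]
    · simp [assign, eval, h]
  | _ => simp_all [assign, eval]

theorem lits_assign (F : Fml) (α : Atom) (b pol : Bool) :
    (F.assign α b).lits_s2 pol ⊆ {x ∈ F.lits_s2 pol | x.1 ≠ α} := by
  induction F generalizing pol with
  | atom p n ts =>
    by_cases h : (⟨p, n, ts⟩ : Atom) = α
    · cases b <;> simp [assign, lits_s2, h]
    · simp [assign, lits_s2, h]
  | neg F ih => exact ih (!pol)
  | conj F G ihF ihG | disj F G ihF ihG =>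
    rintro x (hx | hx)
    · exact ⟨Or.inl (ihF pol hx).1, (ihF pol hx).2⟩
    · exact ⟨Or.inr (ihG pol hx).1, (ihG pol hx).2⟩
  | all _ F ih | exi _ F ih => exact ih pol
  | tru | fls => exact Set.empty_subset _

theorem isQF_assign {F : Fml} (hF : F.isQF) (α : Atom) (b : Bool) : (F.assign α b).isQF := by
  induction F with
  | atom p n ts => by_cases h : (⟨p, n, ts⟩ : Atom) = α <;> cases b <;> simp [assign, isQF, h]
  | _ => simp_all [assign, isQF]

end Fml

theorem Atom.eval_lit (α : Atom) (b : Bool) (v : Atom → Bool) :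
    (α.lit b).eval v = true ↔ v α = b := by
  cases b <;> simp [lit, toFml, Fml.eval]

theorem Atom.lits_lit (α : Atom) (b : Bool) : (α.lit b).lits_s2 true = {(α, b)} := by
  cases b <;> rfl

theorem Atom.isQF_lit (α : Atom) (b : Bool) : (α.lit b).isQF := by
  cases b <;> trivial

namespace Fml

noncomputable def sharedLit (G : Fml) (α : Atom) (b : Bool) (F : Fml) : Fml :=
  if (α, b) ∈ F.lits_s2 true ∩ G.lits_s2 true then α.lit b else .tru

/-- A propositional `∃α. F` that still records the value of `α` through every literal `α^b`
shared by `F` and `G`. -/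
noncomputable def elimStep (G : Fml) (α : Atom) (F : Fml) : Fml :=
  .disj (.conj (F.assign α true) (G.sharedLit α true F))
    (.conj (F.assign α false) (G.sharedLit α false F))

noncomputable def elimAtoms (G : Fml) : List Atom → Fml → Fml
  | [], F => F
  | α :: L, F => elimAtoms G L (G.elimStep α F)

variable {F G : Fml} {α : Atom}

theorem eval_sharedLit (b : Bool) (v : Atom → Bool) :
    (G.sharedLit α b F).eval v = true ↔ ((α, b) ∈ F.lits_s2 true ∩ G.lits_s2 true → v α = b) := by
  unfold sharedLit
  split_ifs with h
  · simp [h, Atom.eval_lit]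
  · simp [h, eval]

theorem eval_elimStep (v : Atom → Bool) :
    (G.elimStep α F).eval v = true ↔ ∃ b, F.eval (Function.update v α b) = true ∧
      ((α, b) ∈ F.lits_s2 true ∩ G.lits_s2 true → v α = b) := by
  simp only [elimStep, eval, Bool.or_eq_true, Bool.and_eq_true, eval_assign, eval_sharedLit]
  constructor
  · rintro (h | h) <;> exact ⟨_, h⟩
  · rintro ⟨(_ | _), h⟩
    exacts [Or.inr h, Or.inl h]

theorem eval_elimStep_of_eval {v : Atom → Bool} (hF : F.eval v = true) :
    (G.elimStep α F).eval v = true :=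
  (eval_elimStep v).2 ⟨v α, by rwa [Function.update_eq_self], fun _ => rfl⟩

/-- If the value `b` of `α` is not that of `v`, the literal `α^b` is missing from `F` or from
`G`; in either case the change of `α` can be undone on one side of `F ⊨ G`. -/
theorem eval_of_eval_elimStep (hFG : ∀ v, F.eval v = true → G.eval v = true)
    {v : Atom → Bool} (h : (G.elimStep α F).eval v = true) : G.eval v = true := by
  obtain ⟨b, hFb, hshared⟩ := (eval_elimStep v).1 h
  by_cases hvb : v α = b
  · subst hvb
    rw [Function.update_eq_self] at hFb
    exact hFG v hFb
  by_cases hG : (α, b) ∈ G.lits_s2 true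
  · have hF : (α, b) ∉ F.lits_s2 true := fun hF => hvb (hshared ⟨hF, hG⟩)
    exact hFG v (eval_of_eval_update hF hFb)
  · exact eval_of_eval_update hG (hFG _ hFb)

theorem lits_elimStep :
    (G.elimStep α F).lits_s2 true ⊆ {x ∈ F.lits_s2 true | x.1 = α → x ∈ G.lits_s2 true} := by
  have hassign (b : Bool) :
      (F.assign α b).lits_s2 true ⊆ {x ∈ F.lits_s2 true | x.1 = α → x ∈ G.lits_s2 true} :=
    fun x hx => ⟨(lits_assign F α b true hx).1, fun h => absurd h (lits_assign F α b true hx).2⟩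
  have hshared (b : Bool) :
      (G.sharedLit α b F).lits_s2 true ⊆ {x ∈ F.lits_s2 true | x.1 = α → x ∈ G.lits_s2 true} := by
    unfold sharedLit
    split_ifs with h
    · simpa [Atom.lits_lit] using h
    · exact Set.empty_subset _
  exact Set.union_subset (Set.union_subset (hassign _) (hshared _))
    (Set.union_subset (hassign _) (hshared _))

theorem isQF_elimStep (hF : F.isQF) : (G.elimStep α F).isQF := by
  have hshared (b : Bool) : (G.sharedLit α b F).isQF := by
    unfold sharedLit
    split_ifs
    exacts [Atom.isQF_lit α b, trivial]
  exact ⟨⟨isQF_assign hF α true, hshared true⟩, ⟨isQF_assign hF α false, hshared false⟩⟩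

theorem isQF_elimAtoms (L : List Atom) (hF : F.isQF) : (G.elimAtoms L F).isQF := by
  induction L generalizing F with
  | nil => exact hF
  | cons α L ih => exact ih (isQF_elimStep hF)

theorem eval_elimAtoms_of_eval (L : List Atom) {v : Atom → Bool} (hF : F.eval v = true) :
    (G.elimAtoms L F).eval v = true := by
  induction L generalizing F with
  | nil => exact hF
  | cons α L ih => exact ih (eval_elimStep_of_eval hF)

theorem eval_of_eval_elimAtoms (L : List Atom) (hFG : ∀ v, F.eval v = true → G.eval v = true)
    {v : Atom → Bool} (h : (G.elimAtoms L F).eval v = true) : G.eval v = true := by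
  induction L generalizing F with
  | nil => exact hFG v h
  | cons α L ih => exact ih (fun _ => eval_of_eval_elimStep hFG) h

theorem lits_elimAtoms (L : List Atom) :
    (G.elimAtoms L F).lits_s2 true ⊆ {x ∈ F.lits_s2 true | x.1 ∈ L → x ∈ G.lits_s2 true} := by
  induction L generalizing F with
  | nil => exact fun x hx => ⟨hx, fun h => absurd h List.not_mem_nil⟩
  | cons α L ih =>
    intro x hx
    obtain ⟨hx, hxG⟩ := ih hx
    obtain ⟨hxF, hxα⟩ := lits_elimStep hx
    exact ⟨hxF, fun hxL => (List.mem_cons.1 hxL).elim hxα hxG⟩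

theorem exists_lyndon_interpolant (hF : F.isQF) (hFG : ∀ v, F.eval v = true → G.eval v = true) :
    ∃ H : Fml, H.isQF ∧ (∀ v, F.eval v = true → H.eval v = true) ∧
      (∀ v, H.eval v = true → G.eval v = true) ∧ H.lits_s2 true ⊆ F.lits_s2 true ∩ G.lits_s2 true := by
  refine ⟨G.elimAtoms F.atoms F, isQF_elimAtoms _ hF, fun _ => eval_elimAtoms_of_eval _,
    fun _ => eval_of_eval_elimAtoms _ hFG, fun x hx => ?_⟩
  obtain ⟨hxF, hxG⟩ := lits_elimAtoms _ hx
  exact ⟨hxF, hxG (mem_atoms_of_mem_lits hxF)⟩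

end Fml

noncomputable def Struc.atomVal {D : Type} (M : Struc D) (a : ℕ → D) (α : Atom) : Bool :=
  decide (M.pr α.pred α.arity fun i => (α.args i).eval M a)

theorem Fml.sat_iff_eval {D : Type} (M : Struc D) (a : ℕ → D) {F : Fml} (hF : F.isQF) :
    F.sat M a ↔ F.eval (M.atomVal a) = true := by
  induction F with
  | all _ _ _ | exi _ _ _ => exact hF.elim
  | _ => simp_all [sat, eval, isQF, Struc.atomVal]

def herbrand (v : Atom → Bool) : Struc Tm := ⟨.app, fun p n ts => v ⟨p, n, ts⟩ = true⟩

theorem Tm.eval_herbrand (v : Atom → Bool) (t : Tm) : t.eval (herbrand v) .var = t := by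
  induction t with
  | var x => rfl
  | app f n ts ih => exact congrArg (Tm.app f n) (funext ih)

theorem atomVal_herbrand (v : Atom → Bool) : (herbrand v).atomVal .var = v := by
  funext α
  simp only [Struc.atomVal, Tm.eval_herbrand]
  exact Bool.decide_eq_true

theorem entails_iff_eval {F G : Fml} (hF : F.isQF) (hG : G.isQF) :
    entails F G ↔ ∀ v, F.eval v = true → G.eval v = true := by
  refine ⟨fun h v hv => ?_, fun h D _ M a => ?_⟩
  · have := h Tm ⟨.var 0⟩ (herbrand v) .var
    rw [Fml.sat_iff_eval _ _ hF, Fml.sat_iff_eval _ _ hG, atomVal_herbrand] at this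
    exact this hv
  · rw [Fml.sat_iff_eval _ _ hF, Fml.sat_iff_eval _ _ hG]
    exact h _

/-- Craig-Lyndon interpolation for ground formulas. For all ground
first-order formulas `F` and `G` without equality with F ⊨ G there exists a ground
Craig-Lyndon interpolant `H` of `F` and `G`. -/
theorem statement2 (F G : Fml) (hF : F.isGround) (hG : G.isGround) (h : entails F G) :
    ∃ H : Fml, H.isGround ∧
      entails F H ∧ entails H G ∧
      H.pred ⊆ F.pred ∩ G.pred ∧
      H.funs ⊆ F.funs ∩ G.funs := by
  obtain ⟨hFqf, hFfree⟩ := hF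
  obtain ⟨H, hHqf, hFH, hHG, hlits⟩ :=
    Fml.exists_lyndon_interpolant hFqf ((entails_iff_eval hFqf hG.1).1 h)
  have hlitsF := hlits.trans Set.inter_subset_left
  have hlitsG := hlits.trans Set.inter_subset_right
  refine ⟨H, ⟨hHqf, ?_⟩, (entails_iff_eval hFqf hHqf).2 hFH, (entails_iff_eval hHqf hG.1).2 hHG,
    ?_, ?_⟩
  · rw [← Set.subset_empty_iff, ← hFfree, Fml.free_eq_biUnion_lits hHqf true,
      Fml.free_eq_biUnion_lits hFqf true]
    exact Set.biUnion_subset_biUnion_left hlitsF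
  · simp only [Fml.pred, Fml.preds_eq_image_lits]
    exact Set.subset_inter (Set.image_mono hlitsF) (Set.image_mono hlitsG)
  · rw [Fml.funs_eq_biUnion_lits H true, Fml.funs_eq_biUnion_lits F true,
      Fml.funs_eq_biUnion_lits G true]
    exact Set.subset_inter (Set.biUnion_subset_biUnion_left hlitsF)
      (Set.biUnion_subset_biUnion_left hlitsG)

end CTIF
end

section
/- Let σ be an injective substitution and let E be a term or a quantifier-free formula such that dom(σ) ∩ var(E) = ∅. Then (E⁻σ)σ = E, i.e., applying σ after inversely applying σ to E yields E back. -/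
open Classical

namespace CTIF

theorem Subst.apply_eq_var_of_notMem_dom {σ : Subst} {x : ℕ} (hx : x ∉ σ.dom) :
    σ x = .var x :=
  not_not.mp hx

/- Wherever `t⁻σ` puts a variable `v` in place of a term, `v` was chosen with `σ v` equal to that
term, so `σ` restores it. -/
theorem Tm.subst_inv_of_disjoint {σ : Subst} :
    ∀ {t : Tm}, Disjoint σ.dom t.vars → (t.inv σ).subst σ = t
  | .var x, hd => by
    rw [Tm.inv]
    split_ifs with h
    · exact h.choose_spec.2
    · exact Subst.apply_eq_var_of_notMem_dom (Set.disjoint_singleton_right.mp hd)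
  | .app f n ts, hd => by
    rw [Tm.inv]
    split_ifs with h
    · exact h.choose_spec.2
    · exact congrArg (Tm.app f n) <| funext fun i =>
        Tm.subst_inv_of_disjoint (hd.mono_right (Set.subset_iUnion (fun i => (ts i).vars) i))

theorem Fml.subst_inv_of_isQF_of_disjoint {σ : Subst} :
    ∀ {E : Fml}, E.isQF → Disjoint σ.dom E.free → (E.inv σ).subst σ = E
  | .tru, _, _ | .fls, _, _ => rfl
  | .atom p n ts, _, hd => congrArg (Fml.atom p n) <| funext fun i =>
      Tm.subst_inv_of_disjoint (hd.mono_right (Set.subset_iUnion (fun i => (ts i).vars) i))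
  | .neg _, hF, hd => congrArg Fml.neg (subst_inv_of_isQF_of_disjoint hF hd)
  | .conj _ _, ⟨hF, hG⟩, hd => congrArg₂ Fml.conj
      (subst_inv_of_isQF_of_disjoint hF (hd.mono_right Set.subset_union_left))
      (subst_inv_of_isQF_of_disjoint hG (hd.mono_right Set.subset_union_right))
  | .disj _ _, ⟨hF, hG⟩, hd => congrArg₂ Fml.disj
      (subst_inv_of_isQF_of_disjoint hF (hd.mono_right Set.subset_union_left))
      (subst_inv_of_isQF_of_disjoint hG (hd.mono_right Set.subset_union_right))

theorem statement6_general (σ : Subst) :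
    (∀ t : Tm, Subst.dom σ ∩ t.vars = ∅ → (Tm.inv σ t).subst σ = t) ∧
    (∀ E : Fml, E.isQF → Subst.dom σ ∩ E.free = ∅ → (Fml.inv σ E).subst σ = E) :=
  ⟨fun _ hd => Tm.subst_inv_of_disjoint (Set.disjoint_iff_inter_eq_empty.mpr hd),
    fun _ hE hd => Fml.subst_inv_of_isQF_of_disjoint hE (Set.disjoint_iff_inter_eq_empty.mpr hd)⟩

/-- If `σ` is an injective substitution and `E` is a term or a
quantifier-free formula with dom(σ) ∩ var(E) = ∅, then (E⁻σ)σ = E. -/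
theorem statement6 (σ : Subst) (hinj : σ.inj) :
    (∀ t : Tm, Subst.dom σ ∩ t.vars = ∅ → (Tm.inv σ t).subst σ = t) ∧
    (∀ E : Fml, E.isQF → Subst.dom σ ∩ E.free = ∅ → (Fml.inv σ E).subst σ = E) :=
  statement6_general σ

end CTIF
end

section
/- Let σ be an injective substitution and let F and G be quantifier-free first-order formulas without equality such that F ⊨ G. Then F⁻σ ⊨ G⁻σ, i.e., entailment between quantifier-free formulas is preserved under inverse application of an injective substitution. -/
open Classical

/-!
Given a model `M` with assignment `a`, take the free term structure and interpret each
predicate on a tuple of terms as `M` does on the values of the `σ`-inverted terms. Since there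
is no equality, nothing constrains the atoms of this structure, and under the identity
assignment a quantifier-free `E` holds in it exactly when `E⁻σ` holds in `M` under `a`.
Applying `F ⊨ G` to this structure gives `F⁻σ ⊨ G⁻σ`.
-/

namespace CTIF

noncomputable def invTermStruc {D : Type} (σ : Subst) (M : Struc D) (a : ℕ → D) : Struc Tm where
  fn f n ts := Tm.app f n ts
  pr p n ts := M.pr p n (fun i => (Tm.inv σ (ts i)).eval M a)

section

variable {D : Type} (σ : Subst) (M : Struc D) (a : ℕ → D)

theorem Tm.eval_invTermStruc_var (t : Tm) : t.eval (invTermStruc σ M a) Tm.var = t := by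
  induction t with
  | var x => rfl
  | app f n ts ih => exact congrArg (Tm.app f n) (funext ih)

theorem Fml.sat_invTermStruc_var_iff {E : Fml} (hE : E.isQF) :
    E.sat (invTermStruc σ M a) Tm.var ↔ (E.inv σ).sat M a := by
  induction E with
  | tru | fls => rfl
  | atom p n ts => simp only [Fml.sat, Fml.inv, Tm.eval_invTermStruc_var]; rfl
  | neg F ih => simp only [Fml.sat, Fml.inv, ih hE]
  | conj F G ihF ihG | disj F G ihF ihG =>
      simp only [Fml.sat, Fml.inv, ihF hE.1, ihG hE.2]
  | all | exi => exact hE.elim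

end

theorem statement7_general (σ : Subst) (F G : Fml)
    (hF : F.isQF) (hG : G.isQF) (h : entails F G) :
    entails (Fml.inv σ F) (Fml.inv σ G) := by
  intro D _ M a hFa
  rw [← Fml.sat_invTermStruc_var_iff σ M a hG]
  exact h Tm ⟨Tm.var 0⟩ (invTermStruc σ M a) Tm.var
    ((Fml.sat_invTermStruc_var_iff σ M a hF).2 hFa)

/-- Entailment between quantifier-free formulas (without equality) is
preserved under inverse application of an injective substitution: if F ⊨ G then
F⁻σ ⊨ G⁻σ. -/
theorem statement7 (σ : Subst) (hinj : σ.inj) (F G : Fml)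
    (hF : F.isQF) (hG : G.isQF) (h : entails F G) :
    entails (Fml.inv σ F) (Fml.inv σ G) :=
  statement7_general σ F G hF hG h

end CTIF
end

section
/- Let F be a first-order formula, let x₁,…,xₙ,y be variables that do not occur bound in F, and let f be an n-ary function symbol that does not occur in F. Then ∀x₁…∀xₙ∃y F is equivalent to ∃f ∀x₁…∀xₙ F{y ↦ f(x₁,…,xₙ)}; semantically: a structure M (over the language without f) satisfies ∀x₁…∀xₙ∃y F under an assignment if and only if there exists an interpretation of f on the domain of M such that the resulting expansion of M satisfies ∀x₁…∀xₙ F{y ↦ f(x₁,…,xₙ)} under that assignment. -/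
/-!
By the substitution lemma, `F{y ↦ f(x₁,…,xₙ)}` holds in an expansion `M'` at the point `d` of
the `xᵢ` iff `F` holds in `M` with `y` sent to `f^{M'}(d)`: no `xᵢ` is captured, and `f` does not
occur in `F`. So the right-hand side says precisely that `f^{M'}` is a Skolem function for
`∀x₁…∀xₙ∃y F`, and one exists by the axiom of choice.
-/

open Classical

namespace CTIF

/-- `M'` agrees with `M` everywhere except possibly in the interpretation of the
function symbol `f`. -/
def StrucEqExceptFn {D : Type} (M M' : Struc D) (f : ℕ) : Prop :=
  M'.pr = M.pr ∧ ∀ g, g ≠ f → M'.fn g = M.fn g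

def updateList {D : Type} (a : ℕ → D) : (xs : List ℕ) → (Fin xs.length → D) → ℕ → D
  | [], _ => a
  | x :: xs, d => updateList (Function.update a x (d 0)) xs (Fin.tail d)

theorem updateList_of_notMem {D : Type} {z : ℕ} :
    ∀ {xs : List ℕ} (a : ℕ → D) (d : Fin xs.length → D), z ∉ xs → updateList a xs d z = a z
  | [], _, _, _ => rfl
  | x :: xs, a, d, hz => by
    rw [List.mem_cons, not_or] at hz
    rw [updateList, updateList_of_notMem _ _ hz.2, Function.update_of_ne hz.1]

theorem updateList_get {D : Type} :
    ∀ {xs : List ℕ}, xs.Nodup → ∀ (a : ℕ → D) (d : Fin xs.length → D) (i : Fin xs.length),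
      updateList a xs d (xs.get i) = d i
  | x :: xs, hnd, a, d, i => by
    rw [List.nodup_cons] at hnd
    cases i using Fin.cases with
    | zero => simp [updateList, updateList_of_notMem _ _ hnd.1]
    | succ i => exact updateList_get hnd.2 _ (Fin.tail d) i

theorem sat_alls {D : Type} (M : Struc D) (G : Fml) :
    ∀ (xs : List ℕ) (a : ℕ → D),
      (alls xs G).sat M a ↔ ∀ d : Fin xs.length → D, G.sat M (updateList a xs d)
  | [], a => ⟨fun h _ => h, fun h => h Fin.elim0⟩
  | x :: xs, a => by
    change (∀ e, (alls xs G).sat M (Function.update a x e)) ↔ _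
    simp only [sat_alls M G xs]
    exact ⟨fun h d => h (d 0) (Fin.tail d), fun h e d => by simpa [updateList] using h (Fin.cons e d)⟩

theorem Tm.eval_congr {D : Type} (M : Struc D) :
    ∀ (t : Tm) {a b : ℕ → D}, (∀ x ∈ t.vars, a x = b x) → t.eval M a = t.eval M b
  | .var x, _, _, h => h x rfl
  | .app f n ts, _, _, h => congrArg (M.fn f n) <| funext fun i =>
      (ts i).eval_congr M fun x hx => h x (Set.mem_iUnion.2 ⟨i, hx⟩)

theorem Tm.eval_subst {D : Type} (M : Struc D) (σ : Subst) (a : ℕ → D) :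
    ∀ t : Tm, (t.subst σ).eval M a = t.eval M (fun z => (σ z).eval M a)
  | .var _ => rfl
  | .app f n ts => congrArg (M.fn f n) <| funext fun i => (ts i).eval_subst M σ a

section StrucEqExceptFn

variable {D : Type} {M M' : Struc D} {f : ℕ}

theorem Tm.eval_eq_of_strucEqExceptFn (hM : StrucEqExceptFn M M' f) (a : ℕ → D) :
    ∀ t : Tm, (∀ n, (f, n) ∉ t.funs) → t.eval M' a = t.eval M a
  | .var _, _ => rfl
  | .app g n ts, hf => by
    have hg : g ≠ f := by
      rintro rfl
      exact hf n (Set.mem_insert _ _)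
    change M'.fn g n _ = M.fn g n _
    rw [hM.2 g hg]
    exact congrArg (M.fn g n) <| funext fun i => (ts i).eval_eq_of_strucEqExceptFn hM a
      fun m hm => hf m (Set.mem_insert_of_mem _ (Set.mem_iUnion.2 ⟨i, hm⟩))

theorem Fml.sat_iff_of_strucEqExceptFn (hM : StrucEqExceptFn M M' f) :
    ∀ (F : Fml) (a : ℕ → D), (∀ n, (f, n) ∉ F.funs) → (F.sat M' a ↔ F.sat M a)
  | .tru, _, _ | .fls, _, _ => Iff.rfl
  | .atom p n ts, a, hf => by
    change M'.pr p n _ ↔ M.pr p n _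
    rw [hM.1, funext fun i => (ts i).eval_eq_of_strucEqExceptFn hM a
      fun m hm => hf m (Set.mem_iUnion.2 ⟨i, hm⟩)]
  | .neg F, a, hf => not_congr (F.sat_iff_of_strucEqExceptFn hM a hf)
  | .conj F G, a, hf => and_congr
      (F.sat_iff_of_strucEqExceptFn hM a fun n hn => hf n (Or.inl hn))
      (G.sat_iff_of_strucEqExceptFn hM a fun n hn => hf n (Or.inr hn))
  | .disj F G, a, hf => or_congr
      (F.sat_iff_of_strucEqExceptFn hM a fun n hn => hf n (Or.inl hn))
      (G.sat_iff_of_strucEqExceptFn hM a fun n hn => hf n (Or.inr hn))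
  | .all x F, a, hf => forall_congr' fun d => F.sat_iff_of_strucEqExceptFn hM _ hf
  | .exi x F, a, hf => exists_congr fun d => F.sat_iff_of_strucEqExceptFn hM _ hf

end StrucEqExceptFn

def Struc.updateFn {D : Type} (M : Struc D) (f n : ℕ) (g : (Fin n → D) → D) : Struc D :=
  ⟨Function.update M.fn f (Function.update (M.fn f) n g), M.pr⟩

theorem strucEqExceptFn_updateFn {D : Type} (M : Struc D) (f n : ℕ) (g : (Fin n → D) → D) :
    StrucEqExceptFn M (M.updateFn f n g) f :=
  ⟨rfl, fun _ hg => Function.update_of_ne hg _ _⟩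

theorem Struc.updateFn_fn_self {D : Type} (M : Struc D) (f n : ℕ) (g : (Fin n → D) → D) :
    (M.updateFn f n g).fn f n = g := by
  simp [Struc.updateFn]

/-- With `B = F.bound`, the side condition making `F.subst σ` capture-free. -/
def Subst.Avoids (σ : Subst) (B : Set ℕ) : Prop := ∀ x ∈ B, ∀ z, z ≠ x → x ∉ (σ z).vars

theorem Subst.Avoids.update_var {σ : Subst} {B : Set ℕ} {x : ℕ} (h : σ.Avoids (insert x B)) :
    Subst.Avoids (Function.update σ x (Tm.var x)) B := by
  intro v hv z hzv
  rcases eq_or_ne z x with rfl | hzx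
  · simpa [Tm.vars] using hzv.symm
  · rw [Function.update_of_ne hzx]
    exact h v (Set.mem_insert_of_mem _ hv) z hzv

theorem Subst.Avoids.eval_update {D : Type} (M : Struc D) {σ : Subst} {B : Set ℕ} {x : ℕ}
    (h : σ.Avoids (insert x B)) (a : ℕ → D) (d : D) :
    (fun z => (Function.update σ x (Tm.var x) z).eval M (Function.update a x d))
      = Function.update (fun z => (σ z).eval M a) x d := by
  funext z
  rcases eq_or_ne z x with rfl | hzx
  · simp [Tm.eval]
  · simp only [Function.update_of_ne hzx]
    refine (σ z).eval_congr M fun v hv => Function.update_of_ne ?_ _ _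
    rintro rfl
    exact h v (Set.mem_insert _ _) z hzx hv

theorem Fml.sat_subst {D : Type} (M : Struc D) :
    ∀ (F : Fml) (σ : Subst) (a : ℕ → D), σ.Avoids F.bound →
      ((F.subst σ).sat M a ↔ F.sat M (fun z => (σ z).eval M a))
  | .tru, _, _, _ | .fls, _, _, _ => Iff.rfl
  | .atom p n ts, σ, a, _ => by
    change M.pr p n _ ↔ M.pr p n _
    rw [funext fun i => (ts i).eval_subst M σ a]
  | .neg F, σ, a, h => not_congr (F.sat_subst M σ a h)
  | .conj F G, σ, a, h => and_congr
      (F.sat_subst M σ a fun x hx => h x (Or.inl hx))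
      (G.sat_subst M σ a fun x hx => h x (Or.inr hx))
  | .disj F G, σ, a, h => or_congr
      (F.sat_subst M σ a fun x hx => h x (Or.inl hx))
      (G.sat_subst M σ a fun x hx => h x (Or.inr hx))
  | .all x F, σ, a, h => forall_congr' fun d => by
      rw [F.sat_subst M _ _ h.update_var, h.eval_update M a d]
  | .exi x F, σ, a, h => exists_congr fun d => by
      rw [F.sat_subst M _ _ h.update_var, h.eval_update M a d]

theorem sat_subst_skolemTerm {D : Type} {M M' : Struc D} {F : Fml} {xs : List ℕ} {y f : ℕ}
    (hM : StrucEqExceptFn M M' f) (hf : ∀ n, (f, n) ∉ F.funs) (hnd : xs.Nodup)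
    (hxb : ∀ x ∈ xs, x ∉ F.bound) (a : ℕ → D) (d : Fin xs.length → D) :
    (F.subst (Function.update Tm.var y (Tm.app f xs.length fun i => Tm.var (xs.get i)))).sat
        M' (updateList a xs d) ↔
      F.sat M (Function.update (updateList a xs d) y (M'.fn f xs.length d)) := by
  have havoid : Subst.Avoids
      (Function.update Tm.var y (Tm.app f xs.length fun i => Tm.var (xs.get i))) F.bound := by
    intro x hx z hzx
    rcases eq_or_ne z y with rfl | hzy
    · simp only [Function.update_self, Tm.vars, Set.mem_iUnion, Set.mem_singleton_iff]
      rintro ⟨i, rfl⟩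
      exact hxb _ (List.get_mem xs i) hx
    · simpa [hzy, Tm.vars] using hzx.symm
  rw [F.sat_subst M' _ _ havoid, F.sat_iff_of_strucEqExceptFn hM _ hf]
  congr! with z
  rcases eq_or_ne z y with rfl | hzy
  · simp only [Function.update_self, Tm.eval, updateList_get hnd]
  · simp only [Function.update_of_ne hzy, Tm.eval]

theorem statement8_general (F : Fml) (xs : List ℕ) (y : ℕ)
    (hnodup : (y :: xs).Nodup)
    (hxb : ∀ x ∈ xs, x ∉ F.bound)
    (f : ℕ) (hf : ∀ n, (f, n) ∉ F.funs) :
    ∀ (D : Type), Nonempty D → ∀ (M : Struc D) (a : ℕ → D),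
      Fml.sat (alls xs (.exi y F)) M a ↔
      ∃ M' : Struc D, StrucEqExceptFn M M' f ∧
        Fml.sat (alls xs (F.subst (Function.update Tm.var y
          (Tm.app f xs.length (fun i => Tm.var (xs.get i)))))) M' a := by
  intro D _ M a
  have hnd : xs.Nodup := (List.nodup_cons.mp hnodup).2
  simp only [sat_alls]
  constructor
  · intro h
    choose skolem hskolem using h
    refine ⟨M.updateFn f xs.length skolem, strucEqExceptFn_updateFn .., fun d => ?_⟩
    rw [sat_subst_skolemTerm (strucEqExceptFn_updateFn ..) hf hnd hxb, Struc.updateFn_fn_self]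
    exact hskolem d
  · rintro ⟨M', hM, h⟩ d
    exact ⟨_, (sat_subst_skolemTerm hM hf hnd hxb a d).mp (h d)⟩

/-- Second-order Skolemization. If x₁,…,xₙ,y do not occur bound in `F`
and the n-ary function symbol `f` does not occur in `F`, then a structure `M`
satisfies ∀x₁…∀xₙ∃y F under an assignment iff some expansion of `M` (reinterpreting
only `f`) satisfies ∀x₁…∀xₙ F{y ↦ f(x₁,…,xₙ)} under that assignment. -/
theorem statement8 (F : Fml) (xs : List ℕ) (y : ℕ)
    (hnodup : (y :: xs).Nodup)
    (hxb : ∀ x ∈ xs, x ∉ F.bound) (hyb : y ∉ F.bound)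
    (f : ℕ) (hf : ∀ n, (f, n) ∉ F.funs) :
    ∀ (D : Type), Nonempty D → ∀ (M : Struc D) (a : ℕ → D),
      Fml.sat (alls xs (.exi y F)) M a ↔
      ∃ M' : Struc D, StrucEqExceptFn M M' f ∧
        Fml.sat (alls xs (F.subst (Function.update Tm.var y
          (Tm.app f xs.length (fun i => Tm.var (xs.get i)))))) M' a :=
  statement8_general F xs y hnodup hxb f hf

end CTIF
end
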